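/- arXiv:1010.4146 — 4 statements merged into one kernel-verified Lean document; each statement's English description precedes it below -/
import Mathlib

section
/- For every natural number c ≥ 4, the essential polynomials of K_4(4,2,1,2,c+2,c) and K_4(3,2,2,c,1,c+3) are equal as polynomials in ℤ[x], where Q for parameters (α,β,γ,δ,ε,η) is x^{η+δ+ε} + x^{δ+γ+β} + x^{α+η+γ} + x^{α+ε+β} + x^{α+δ} + x^{η+β} + x^{γ+ε} - (x+1)(x^α + x^β + x^γ + x^δ + x^ε + x^η). -/
open Polynomial

/-- Essential polynomial of the K_4-homeomorph K_4(α,β,γ,δ,ε,η). -/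
noncomputable def essQ (α β γ δ ε η : ℕ) : Polynomial ℤ :=
  X ^ (η + δ + ε) + X ^ (δ + γ + β) + X ^ (α + η + γ) + X ^ (α + ε + β) +
    X ^ (α + δ) + X ^ (η + β) + X ^ (γ + ε) -
    (X + 1) * (X ^ α + X ^ β + X ^ γ + X ^ δ + X ^ ε + X ^ η)

theorem stmt_16_general (c : ℕ) :
    essQ 4 2 1 2 (c+2) c = essQ 3 2 2 c 1 (c+3) := by
  unfold essQ
  ring

theorem stmt_16 (c : ℕ) (h : 4 ≤ c) :
    essQ 4 2 1 2 (c+2) c = essQ 3 2 2 c 1 (c+3) :=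
  stmt_16_general c
end

section
/- For every natural number b ≥ 2, the essential polynomials of K_4(4,2,1,b+2,b+2,b) and K_4(4,2,1,b+1,b,b+3) are equal as polynomials in ℤ[x], where Q for parameters (α,β,γ,δ,ε,η) is x^{η+δ+ε} + x^{δ+γ+β} + x^{α+η+γ} + x^{α+ε+β} + x^{α+δ} + x^{η+β} + x^{γ+ε} - (x+1)(x^α + x^β + x^γ + x^δ + x^ε + x^η). -/
open Polynomial

theorem stmt_17_general (b : ℕ) :
    essQ 4 2 1 (b+2) (b+2) b = essQ 4 2 1 (b+1) b (b+3) := by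
  unfold essQ
  ring

theorem stmt_17 (b : ℕ) (h : 2 ≤ b) :
    essQ 4 2 1 (b+2) (b+2) b = essQ 4 2 1 (b+1) b (b+3) :=
  stmt_17_general b
end

section
/- For every natural number b ≥ 2, the essential polynomials of K_4(4,2,1,b,b+4,b+2) and K_4(4,2,1,b+1,b,b+5) are equal as polynomials in ℤ[x], where Q for parameters (α,β,γ,δ,ε,η) is x^{η+δ+ε} + x^{δ+γ+β} + x^{α+η+γ} + x^{α+ε+β} + x^{α+δ} + x^{η+β} + x^{γ+ε} - (x+1)(x^α + x^β + x^γ + x^δ + x^ε + x^η). -/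
open Polynomial

theorem stmt_18_general (b : ℕ) :
    essQ 4 2 1 b (b+4) (b+2) = essQ 4 2 1 (b+1) b (b+5) := by
  unfold essQ
  ring

theorem stmt_18 (b : ℕ) (h : 2 ≤ b) :
    essQ 4 2 1 b (b+4) (b+2) = essQ 4 2 1 (b+1) b (b+5) :=
  stmt_18_general b
end

section
/- For natural numbers δ ≥ 2, η ≥ 2, ε ≥ 2 and a, b ≥ 2 with η + δ + ε = a + b + 1, if the polynomial identity x^δ (x^2 + x + 1) + (x^η - x^a - x^b)(x^3 + x + 1) + x^ε (x^4 + x^2 + 1) = 2x^3 + x^2 holds in ℤ[x], then 2 ∈ {δ, ε, η}. -/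
/-!
Compare the coefficients of `x ^ 2`. All exponents are at least `2` and every cofactor has
constant term `1`, so the left side contributes `[δ = 2] + [η = 2] + [ε = 2] - [a = 2] - [b = 2]`,
and this can only equal `1` if one of `δ, η, ε` is `2`.
-/

open Polynomial

theorem coeff_X_pow_mul_of_le {R : Type*} [Semiring R] (p : R[X]) {n k : ℕ} (hkn : k ≤ n) :
    (X ^ n * p).coeff k = if n = k then p.coeff 0 else 0 := by
  rw [coeff_X_pow_mul']
  by_cases hnk : n = k
  · simp [hnk]
  · simp [hnk, show ¬n ≤ k by omega]

theorem stmt_19_general (δ η ε a b : ℕ) (hδ : 2 ≤ δ) (hη : 2 ≤ η) (hε : 2 ≤ ε)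
    (ha : 2 ≤ a) (hb : 2 ≤ b)
    (h : (X : ℤ[X]) ^ δ * (X ^ 2 + X + 1) +
        ((X : ℤ[X]) ^ η - X ^ a - X ^ b) * (X ^ 3 + X + 1) +
        X ^ ε * (X ^ 4 + X ^ 2 + 1) = 2 * X ^ 3 + X ^ 2) :
    δ = 2 ∨ ε = 2 ∨ η = 2 := by
  have hcoeff := congrArg (coeff · 2) h
  simp only [sub_mul, coeff_add, coeff_sub, coeff_X_pow_mul_of_le _ hδ, coeff_X_pow_mul_of_le _ hη,
    coeff_X_pow_mul_of_le _ hε, coeff_X_pow_mul_of_le _ ha, coeff_X_pow_mul_of_le _ hb] at hcoeff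
  norm_num [coeff_X, coeff_one, coeff_X_pow] at hcoeff
  split_ifs at hcoeff <;> omega

theorem stmt_19 (δ η ε a b : ℕ) (hδ : 2 ≤ δ) (hη : 2 ≤ η) (hε : 2 ≤ ε)
    (ha : 2 ≤ a) (hb : 2 ≤ b) (hsum : η + δ + ε = a + b + 1)
    (h : (X : ℤ[X]) ^ δ * (X ^ 2 + X + 1) +
        ((X : ℤ[X]) ^ η - X ^ a - X ^ b) * (X ^ 3 + X + 1) +
        X ^ ε * (X ^ 4 + X ^ 2 + 1) = 2 * X ^ 3 + X ^ 2) :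
    δ = 2 ∨ ε = 2 ∨ η = 2 :=
  stmt_19_general δ η ε a b hδ hη hε ha hb h
end
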